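/- arXiv:1302.3157 — 2 statements merged into one kernel-verified Lean document; each statement's English description precedes it below -/
import Mathlib

section
/- In the hyperoctahedral group B_n, the maximal length representative of a left coset W_P w (where W_P is generated by s_2,...,s_n) is the unique element of the coset whose one-line notation has the values -2,-3,...,-n appearing in that order (with 1 or -1 in the position determined by the coset). -/
/-- `w` is a signed permutation of `{1,…,n}` (type `B` Weyl group element),
viewed inside `Equiv.Perm ℤ`: it is odd and fixes everything beyond `n`. -/
def IsSignedPerm (n : ℕ) (w : Equiv.Perm ℤ) : Prop :=
  (∀ x : ℤ, w (-x) = - w x) ∧ ∀ x : ℤ, (n : ℤ) < |x| → w x = x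

/-- The simple reflections of the hyperoctahedral group `Bₙ`:
for `i < n`, `sᵢ` swaps the values `i, i+1` (and `-i, -(i+1)`);
`sₙ` changes the sign of `n`. -/
def simpleB (n i : ℕ) : Equiv.Perm ℤ :=
  if i = n then Equiv.swap (n : ℤ) (-(n : ℤ))
  else Equiv.swap (i : ℤ) ((i : ℤ) + 1) * Equiv.swap (-(i : ℤ)) (-(i : ℤ) - 1)

/-- The parabolic subgroup `W_P` generated by `s₂, …, sₙ`. -/
def WP_B (n : ℕ) : Subgroup (Equiv.Perm ℤ) :=
  Subgroup.closure {g | ∃ i : ℕ, 2 ≤ i ∧ i ≤ n ∧ g = simpleB n i}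

/-- The type `B` length function. -/
noncomputable def lenB (n : ℕ) (w : Equiv.Perm ℤ) : ℕ :=
  ((Finset.Icc (1 : ℤ) (n : ℤ) ×ˢ Finset.Icc (1 : ℤ) (n : ℤ)).filter
    (fun p => p.1 < p.2 ∧ w p.2 < w p.1)).card +
  ((Finset.Icc (1 : ℤ) (n : ℤ) ×ˢ Finset.Icc (1 : ℤ) (n : ℤ)).filter
    (fun p => p.1 ≤ p.2 ∧ w p.1 + w p.2 < 0)).card

/-- Reflections of `Bₙ`: conjugates of simple reflections by group elements. -/
def IsReflB (n : ℕ) (t : Equiv.Perm ℤ) : Prop :=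
  ∃ g s : Equiv.Perm ℤ, IsSignedPerm n g ∧
    (∃ i : ℕ, 1 ≤ i ∧ i ≤ n ∧ s = simpleB n i) ∧ t = g * s * g⁻¹

/-- Bruhat order on `Bₙ`. -/
def BruhatLE_B (n : ℕ) : Equiv.Perm ℤ → Equiv.Perm ℤ → Prop :=
  Relation.ReflTransGen
    (fun a b => (∃ t, IsReflB n t ∧ b = t * a) ∧ lenB n a < lenB n b)

/-- `v` is a minimal length representative of its left coset `W_P v`. -/
def IsMinRepB (n : ℕ) (v : Equiv.Perm ℤ) : Prop :=
  IsSignedPerm n v ∧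
    ∀ w : Equiv.Perm ℤ, IsSignedPerm n w → w * v⁻¹ ∈ WP_B n → lenB n v ≤ lenB n w

/-- `u` is a maximal length representative of its left coset `W_P u`. -/
def IsMaxRepB (n : ℕ) (u : Equiv.Perm ℤ) : Prop :=
  IsSignedPerm n u ∧
    ∀ w : Equiv.Perm ℤ, IsSignedPerm n w → w * u⁻¹ ∈ WP_B n → lenB n w ≤ lenB n u

/-!
Left multiplication by `W_P` permutes the values `±2, …, ±n` and fixes `±1`. Conversely `W_P`
contains every signed permutation fixing `1`: an element of `W_P` (a product of adjacent
transpositions and a conjugate of `sₙ`) moves the value at the top position back into place, and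
one inducts on the support. So the coset of `u` consists of the signed permutations `w` with
`w c = 1`, where `c = u⁻¹ 1`.

Write the length as a sum over pairs of positions. If the entries of `u` off position `|c|` are
negative and decreasing, every pair contributes at least as much to `u` as to any `w` in the coset,
and equality at every pair forces `w` to have the same shape; a monotone bijection from the
positions other than `|c|` onto the values `2, …, n` is unique, so then `w = u`. Every coset
contains such an element, so it is the strict maximum, and its shape says exactly that
`-2, …, -n` appear in order.
-/

open Equiv Finset

theorem StrictMonoOn.eqOn_of_mapsTo {α β : Type*} [LinearOrder α] [LinearOrder β]
    {s : Finset α} {t : Finset β} {f g : α → β} (hst : #s = #t)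
    (hf : StrictMonoOn f s) (hg : StrictMonoOn g s) (hfm : Set.MapsTo f s t)
    (hgm : Set.MapsTo g s t) : Set.EqOn f g s := by
  have key : ∀ φ : α → β, StrictMonoOn φ s → Set.MapsTo φ s t →
      φ ∘ s.orderEmbOfFin rfl = t.orderEmbOfFin hst.symm := fun φ hφ hφm =>
    orderEmbOfFin_unique _ (fun i => hφm (s.orderEmbOfFin_mem rfl i)) fun i j hij =>
      hφ (s.orderEmbOfFin_mem rfl i) (s.orderEmbOfFin_mem rfl j)
        ((s.orderEmbOfFin rfl).strictMono hij)
  intro x hx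
  obtain ⟨i, rfl⟩ : x ∈ Set.range (s.orderEmbOfFin rfl) := by rwa [range_orderEmbOfFin]
  exact congrFun ((key f hf hfm).trans (key g hg hgm).symm) i

namespace IsSignedPerm

variable {n m : ℕ} {u w : Perm ℤ} {c x : ℤ}

theorem one : IsSignedPerm n 1 := ⟨fun _ => rfl, fun _ _ => rfl⟩

theorem mul (hw : IsSignedPerm n w) (hu : IsSignedPerm n u) : IsSignedPerm n (w * u) :=
  ⟨fun x => by rw [Perm.mul_apply, Perm.mul_apply, hu.1, hw.1],
    fun x hx => by rw [Perm.mul_apply, hu.2 x hx, hw.2 x hx]⟩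

theorem inv (hu : IsSignedPerm n u) : IsSignedPerm n u⁻¹ :=
  ⟨fun x => by rw [Perm.inv_eq_iff_eq, hu.1]; simp,
    fun x hx => Perm.inv_eq_iff_eq.2 (hu.2 x hx).symm⟩

theorem mono (hu : IsSignedPerm m u) (hmn : m ≤ n) : IsSignedPerm n u :=
  ⟨hu.1, fun x hx => hu.2 x (by omega)⟩

theorem of_succ (hu : IsSignedPerm (m + 1) u) (hm : u (m + 1) = m + 1) : IsSignedPerm m u := by
  refine ⟨hu.1, fun x hx => ?_⟩
  by_cases hx' : ((m + 1 : ℕ) : ℤ) < |x|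
  · exact hu.2 x hx'
  obtain rfl | rfl : x = m + 1 ∨ x = -(m + 1) := by
    rcases abs_cases x with ⟨h, _⟩ | ⟨h, _⟩ <;> push_cast at hx' <;> omega
  · exact hm
  · rw [hu.1, hm]

theorem map_zero (hu : IsSignedPerm n u) : u 0 = 0 := by
  have := hu.1 0
  rw [neg_zero] at this
  omega

theorem abs_apply_le (hu : IsSignedPerm n u) (hx : |x| ≤ n) : |u x| ≤ n := by
  by_contra! h
  have hux : u x = x := u.injective (hu.2 _ h)
  rw [hux] at h
  omega

theorem ext (hu : IsSignedPerm n u) (hw : IsSignedPerm n w)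
    (h : ∀ x : ℤ, 1 ≤ x → x ≤ n → u x = w x) : u = w := by
  ext x
  by_cases hxn : (n : ℤ) < |x|
  · rw [hu.2 x hxn, hw.2 x hxn]
  rcases lt_trichotomy x 0 with hx | rfl | hx
  · have := h (-x) (by omega) (by rw [abs_of_neg hx] at hxn; omega)
    rw [hu.1, hw.1] at this
    exact neg_injective this
  · rw [hu.map_zero, hw.map_zero]
  · exact h x hx (by rw [abs_of_pos hx] at hxn; omega)

theorem two_le_abs_apply (hu : IsSignedPerm n u) (huc : u c = 1) (h0 : x ≠ 0) (hc : x ≠ c)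
    (hc' : x ≠ -c) : 2 ≤ |u x| := by
  have h0' := u.injective.ne h0
  have hc := u.injective.ne hc
  have hc' := u.injective.ne hc'
  rw [hu.map_zero] at h0'
  rw [hu.1, huc] at hc'
  rw [huc] at hc
  exact le_abs'.2 (by omega)

theorem ne_zero_of_apply_eq_one (hu : IsSignedPerm n u) (huc : u c = 1) : c ≠ 0 := by
  rintro rfl
  rw [hu.map_zero] at huc
  omega

theorem apply_abs (hu : IsSignedPerm n u) (huc : u c = 1) :
    u |c| = if 0 < c then 1 else -1 := by
  have hc := hu.ne_zero_of_apply_eq_one huc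
  split_ifs with h
  · rw [abs_of_pos h, huc]
  · rw [abs_of_neg (by omega), hu.1, huc]

end IsSignedPerm

theorem isSignedPerm_swap_neg {n : ℕ} {a : ℤ} (ha : |a| ≤ n) : IsSignedPerm n (swap a (-a)) := by
  refine ⟨fun x => ?_, fun x hx => swap_apply_of_ne_of_ne ?_ ?_⟩
  · simp only [swap_apply_def]
    split_ifs <;> omega
  · rintro rfl
    omega
  · rintro rfl
    rw [abs_neg] at hx
    omega

theorem isSignedPerm_swap_mul_swap_neg {n : ℕ} {a b : ℤ} (ha : 0 < a) (hb : 0 < b)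
    (han : a ≤ n) (hbn : b ≤ n) : IsSignedPerm n (swap a b * swap (-a) (-b)) := by
  refine ⟨fun x => ?_, fun x hx => ?_⟩
  · simp only [Perm.mul_apply, swap_apply_def]
    split_ifs <;> omega
  · rw [lt_abs] at hx
    simp only [Perm.mul_apply, swap_apply_def]
    split_ifs <;> omega

section Parabolic

variable {n : ℕ}

theorem simpleB_of_ne {i : ℕ} (h : i ≠ n) :
    simpleB n i = swap (i : ℤ) (i + 1) * swap (-(i : ℤ)) (-(i + 1)) := by
  rw [simpleB, if_neg h, neg_add']

theorem simpleB_mem_WP_B {i : ℕ} (hi : 2 ≤ i) (hin : i ≤ n) : simpleB n i ∈ WP_B n :=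
  Subgroup.subset_closure ⟨i, hi, hin, rfl⟩

theorem simpleB_apply_one {i : ℕ} (hi : 2 ≤ i) : simpleB n i 1 = 1 := by
  unfold simpleB
  split_ifs <;> simp only [Perm.mul_apply, swap_apply_def] <;> split_ifs <;> omega

theorem WP_B_le_stabilizer : WP_B n ≤ MulAction.stabilizer (Perm ℤ) (1 : ℤ) := by
  refine Subgroup.closure_le _ |>.2 ?_
  rintro _ ⟨i, hi, -, rfl⟩
  exact simpleB_apply_one hi

theorem apply_one_of_mem_WP_B {g : Perm ℤ} (hg : g ∈ WP_B n) : g 1 = 1 :=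
  WP_B_le_stabilizer hg

theorem exists_mem_WP_B_apply_natCast {a m : ℕ} (ha : 2 ≤ a) (ham : a ≤ m) (hmn : m ≤ n) :
    ∃ h ∈ WP_B n, IsSignedPerm m h ∧ h a = m := by
  induction m, ham using Nat.le_induction with
  | base => exact ⟨1, one_mem _, IsSignedPerm.one, rfl⟩
  | succ m ham ih =>
    obtain ⟨h, hh, hsign, hha⟩ := ih (by omega)
    have hs := simpleB_of_ne (n := n) (i := m) (by omega)
    refine ⟨simpleB n m * h, mul_mem (simpleB_mem_WP_B (by omega) (by omega)) hh, ?_, ?_⟩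
    · rw [hs]
      exact (isSignedPerm_swap_mul_swap_neg (by omega) (by omega) (by push_cast; omega)
        (by push_cast; omega)).mul (hsign.mono (by omega))
    · rw [Perm.mul_apply, hha, hs]
      simp only [Perm.mul_apply, swap_apply_def]
      split_ifs <;> omega

theorem swap_neg_mem_WP_B {a : ℕ} (ha : 2 ≤ a) (han : a ≤ n) : swap (a : ℤ) (-a) ∈ WP_B n := by
  induction han using Nat.decreasingInduction with
  | self =>
    have : simpleB n n = swap (n : ℤ) (-n) := if_pos rfl
    exact this ▸ simpleB_mem_WP_B ha le_rfl
  | of_succ a hlt ih =>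
    have hs := simpleB_mem_WP_B ha hlt.le
    have h1 : simpleB n a ((a + 1 : ℕ) : ℤ) = a := by
      rw [simpleB_of_ne hlt.ne]
      simp only [Perm.mul_apply, swap_apply_def]
      split_ifs <;> omega
    have h2 : simpleB n a (-((a + 1 : ℕ) : ℤ)) = -a := by
      rw [simpleB_of_ne hlt.ne]
      simp only [Perm.mul_apply, swap_apply_def]
      split_ifs <;> omega
    have hconj := swap_apply_apply (simpleB n a) ((a + 1 : ℕ) : ℤ) (-((a + 1 : ℕ) : ℤ))
    rw [h1, h2] at hconj
    rw [hconj]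
    exact mul_mem (mul_mem hs (ih (by omega))) (inv_mem hs)

theorem exists_mem_WP_B_apply_eq {v : ℤ} {m : ℕ} (hv : 2 ≤ |v|) (hvm : |v| ≤ m) (hmn : m ≤ n) :
    ∃ h ∈ WP_B n, IsSignedPerm m h ∧ h v = m := by
  obtain ⟨a, ha⟩ : ∃ a : ℕ, (a : ℤ) = |v| := ⟨_, Int.natCast_natAbs v⟩
  obtain ⟨h, hh, hsign, hva⟩ :=
    exists_mem_WP_B_apply_natCast (n := n) (a := a) (m := m) (by omega) (by omega) hmn
  rcases abs_choice v with hv' | hv'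
  · exact ⟨h, hh, hsign, by rw [← hv', ← ha, hva]⟩
  · refine ⟨h * swap (a : ℤ) (-a), mul_mem hh (swap_neg_mem_WP_B (by omega) (by omega)),
      hsign.mul (isSignedPerm_swap_neg (by rw [abs_of_nonneg (by omega)]; omega)), ?_⟩
    rw [Perm.mul_apply, show v = -a by omega, swap_apply_right, hva]

theorem mem_WP_B_of_apply_one {g : Perm ℤ} (hg : IsSignedPerm n g) (hg1 : g 1 = 1) :
    g ∈ WP_B n := by
  -- induction on the support: `IsSignedPerm m g` says that `g` moves only `-m, …, m`
  suffices ∀ m ≤ n, ∀ g : Perm ℤ, IsSignedPerm m g → g 1 = 1 → g ∈ WP_B n from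
    this n le_rfl g hg hg1
  intro m
  induction m with
  | zero =>
    intro _ g hg _
    rw [hg.ext IsSignedPerm.one fun x h1 h2 => by omega]
    exact one_mem _
  | succ m ih =>
    intro hmn g hg hg1
    obtain ⟨h, hh, hsign, hgm⟩ :
        ∃ h ∈ WP_B n, IsSignedPerm (m + 1) h ∧ h (g (m + 1)) = (m + 1 : ℕ) := by
      rcases Nat.eq_zero_or_pos m with rfl | hm
      · exact ⟨1, one_mem _, IsSignedPerm.one, by simpa using hg1⟩
      · refine exists_mem_WP_B_apply_eq (hg.two_le_abs_apply hg1 ?_ ?_ ?_)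
          (hg.abs_apply_le (by rw [abs_of_pos (by omega)]; push_cast; rfl)) hmn <;> omega
    have hhg : h * g ∈ WP_B n := by
      refine ih (by omega) _ ((hsign.mul hg).of_succ ?_) ?_
      · rw [Perm.mul_apply, hgm]; push_cast; rfl
      · rw [Perm.mul_apply, hg1, apply_one_of_mem_WP_B hh]
    simpa using mul_mem (inv_mem hh) hhg

theorem mul_inv_mem_WP_B_iff {u w : Perm ℤ} (hu : IsSignedPerm n u) (hw : IsSignedPerm n w) :
    w * u⁻¹ ∈ WP_B n ↔ w (u.symm 1) = 1 :=
  ⟨apply_one_of_mem_WP_B, mem_WP_B_of_apply_one (hw.mul hu.inv)⟩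

end Parabolic

def NegStrictAntiOn (u : ℤ → ℤ) (s : Set ℤ) : Prop :=
  (∀ x ∈ s, u x < 0) ∧ StrictAntiOn u s

noncomputable def posExcept (n : ℕ) (p : ℤ) : Finset ℤ := (Icc 1 (n : ℤ)).erase p

section MaxShape

variable {n : ℕ} {u w : Perm ℤ} {c x : ℤ}

theorem mem_posExcept {p : ℤ} : x ∈ posExcept n p ↔ 1 ≤ x ∧ x ≤ n ∧ x ≠ p := by
  rw [posExcept, mem_erase, mem_Icc]
  tauto

theorem card_posExcept {p : ℤ} (hp : 1 ≤ p) (hpn : p ≤ n) :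
    #(posExcept n p) = #(Icc 2 (n : ℤ)) := by
  rw [posExcept, card_erase_of_mem (mem_Icc.2 ⟨hp, hpn⟩), Int.card_Icc, Int.card_Icc]
  omega

theorem IsSignedPerm.abs_apply_mem_Icc (hu : IsSignedPerm n u) (huc : u c = 1)
    (hx : x ∈ posExcept n |c|) : |u x| ∈ Set.Icc (2 : ℤ) n := by
  rw [mem_posExcept] at hx
  refine ⟨hu.two_le_abs_apply huc ?_ ?_ ?_, hu.abs_apply_le (by rw [abs_of_pos] <;> omega)⟩ <;>
    rcases abs_cases c with ⟨h, _⟩ | ⟨h, _⟩ <;> omega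

theorem IsSignedPerm.mem_posExcept_of_abs_apply_mem_Icc (hu : IsSignedPerm n u) (huc : u c = 1)
    (hx : 0 < x) (h : |u x| ∈ Set.Icc (2 : ℤ) n) : x ∈ posExcept n |c| := by
  have hxn : |u.symm (u x)| ≤ n := hu.inv.abs_apply_le h.2
  rw [symm_apply_apply, abs_of_pos hx] at hxn
  refine mem_posExcept.2 ⟨hx, hxn, ?_⟩
  rintro rfl
  have h2 := h.1
  rw [hu.apply_abs huc] at h2
  split_ifs at h2 <;> simp at h2

theorem IsSignedPerm.neg_values_in_order_of_negStrictAntiOn (hu : IsSignedPerm n u)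
    (huc : u c = 1) (h : NegStrictAntiOn u (posExcept n |c|)) :
    (∀ k : ℤ, 2 ≤ k → k ≤ n → 0 < u.symm (-k)) ∧
      ∀ k : ℤ, 2 ≤ k → k + 1 ≤ n → u.symm (-k) < u.symm (-(k + 1)) := by
  have hpos : ∀ k : ℤ, 2 ≤ k → k ≤ n → 0 < u.symm (-k) := by
    intro k hk hkn
    by_contra! hx
    have hux : u (-u.symm (-k)) = k := by rw [hu.1, apply_symm_apply, neg_neg]
    have hx0 : u.symm (-k) ≠ 0 := fun h0 => by
      rw [h0, neg_zero, hu.map_zero] at hux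
      omega
    have := h.1 _ (hu.mem_posExcept_of_abs_apply_mem_Icc (x := -u.symm (-k)) huc (by omega)
      (by rw [hux, abs_of_pos (by omega)]; exact ⟨hk, hkn⟩))
    omega
  have hmem : ∀ k : ℤ, 2 ≤ k → k ≤ n → u.symm (-k) ∈ posExcept n |c| := fun k hk hkn =>
    hu.mem_posExcept_of_abs_apply_mem_Icc huc (hpos k hk hkn)
      (by rw [apply_symm_apply, abs_neg, abs_of_pos (by omega)]; exact ⟨hk, hkn⟩)
  refine ⟨hpos, fun k hk hkn => ?_⟩
  have := h.2.neg.lt_iff_lt (hmem k hk (by omega)) (hmem (k + 1) (by omega) hkn)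
  simp only [apply_symm_apply, neg_neg] at this
  exact this.1 (by omega)

theorem IsSignedPerm.negStrictAntiOn_of_neg_values_in_order (hu : IsSignedPerm n u)
    (huc : u c = 1) (hpos : ∀ k : ℤ, 2 ≤ k → k ≤ n → 0 < u.symm (-k))
    (hmono : ∀ k : ℤ, 2 ≤ k → k + 1 ≤ n → u.symm (-k) < u.symm (-(k + 1))) :
    NegStrictAntiOn u (posExcept n |c|) := by
  have hφ : StrictMonoOn (fun k => u.symm (-k)) (Set.Icc 2 n) :=
    strictMonoOn_of_lt_add_one Set.ordConnected_Icc fun k _ hk hk1 => hmono k hk.1 hk1.2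
  have hneg : ∀ x ∈ posExcept n |c|, u x < 0 := by
    intro x hx
    have hux := hu.abs_apply_mem_Icc huc hx
    by_contra! h
    rw [abs_of_nonneg h] at hux
    have := hpos (u x) hux.1 hux.2
    rw [← hu.1, symm_apply_apply] at this
    rw [mem_posExcept] at hx
    omega
  refine ⟨hneg, fun x hx y hy hxy => ?_⟩
  have hux := hu.abs_apply_mem_Icc huc hx
  have huy := hu.abs_apply_mem_Icc huc hy
  rw [abs_of_neg (hneg x hx)] at hux
  rw [abs_of_neg (hneg y hy)] at huy
  have := hφ.lt_iff_lt hux huy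
  simp only [neg_neg, symm_apply_apply] at this
  exact neg_lt_neg_iff.1 (this.1 hxy)

theorem eq_of_negStrictAntiOn_posExcept (hu : IsSignedPerm n u) (hw : IsSignedPerm n w)
    (huc : u c = 1) (hwc : w c = 1) (hcn : |c| ≤ n) (hu' : NegStrictAntiOn u (posExcept n |c|))
    (hw' : NegStrictAntiOn w (posExcept n |c|)) : u = w := by
  have hc := Int.one_le_abs (hu.ne_zero_of_apply_eq_one huc)
  have hmaps : ∀ v : Perm ℤ, IsSignedPerm n v → v c = 1 → NegStrictAntiOn v (posExcept n |c|) →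
      Set.MapsTo (fun x => -v x) (posExcept n |c|) (Icc 2 (n : ℤ)) := by
    intro v hv hvc hv' x hx
    have hvx := hv.abs_apply_mem_Icc hvc hx
    rw [abs_of_neg (hv'.1 x hx)] at hvx
    exact mem_Icc.2 hvx
  have hS := StrictMonoOn.eqOn_of_mapsTo (card_posExcept hc hcn) hu'.2.neg hw'.2.neg
    (hmaps u hu huc hu') (hmaps w hw hwc hw')
  refine hu.ext hw fun x h1 h2 => ?_
  rcases eq_or_ne x |c| with rfl | hx
  · rw [hu.apply_abs huc, hw.apply_abs hwc]
  · exact neg_injective (hS (mem_posExcept.2 ⟨h1, h2, hx⟩))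

def pairInv (w : Perm ℤ) (q : ℤ × ℤ) : ℕ :=
  (if q.1 < q.2 ∧ w q.2 < w q.1 then 1 else 0) + (if q.1 ≤ q.2 ∧ w q.1 + w q.2 < 0 then 1 else 0)

theorem lenB_eq_sum_pairInv (n : ℕ) (w : Perm ℤ) :
    lenB n w = ∑ q ∈ Icc 1 (n : ℤ) ×ˢ Icc 1 (n : ℤ), pairInv w q := by
  rw [lenB, card_filter, card_filter, ← sum_add_distrib]
  rfl

theorem pairInv_le_of_negStrictAntiOn (hu : IsSignedPerm n u) (hw : IsSignedPerm n w)
    (huc : u c = 1) (hwc : w c = 1) (hu' : NegStrictAntiOn u (posExcept n |c|)) {a b : ℤ}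
    (ha : a ∈ Icc 1 (n : ℤ)) (hb : b ∈ Icc 1 (n : ℤ)) : pairInv w (a, b) ≤ pairInv u (a, b) := by
  have key : ∀ x ∈ Icc 1 (n : ℤ), (x = |c| ∧ u x = w x ∧ (u x = 1 ∨ u x = -1)) ∨
      (x ≠ |c| ∧ u x ≤ -2 ∧ (w x ≤ -2 ∨ 2 ≤ w x)) := by
    intro x hx
    rcases eq_or_ne x |c| with rfl | hxc
    · rw [hu.apply_abs huc, hw.apply_abs hwc]
      split_ifs <;> simp
    · rw [mem_Icc] at hx
      have hx' : x ∈ posExcept n |c| := mem_posExcept.2 ⟨hx.1, hx.2, hxc⟩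
      have hux := (hu.abs_apply_mem_Icc huc hx').1
      have hwx := (hw.abs_apply_mem_Icc hwc hx').1
      rw [le_abs'] at hux hwx
      have := hu'.1 x hx'
      right
      omega
  have hanti : a < b → a ≠ |c| → b ≠ |c| → u b < u a := fun hab hac hbc =>
    hu'.2 (mem_posExcept.2 ⟨(mem_Icc.1 ha).1, (mem_Icc.1 ha).2, hac⟩)
      (mem_posExcept.2 ⟨(mem_Icc.1 hb).1, (mem_Icc.1 hb).2, hbc⟩) hab
  have ka := key a ha
  have kb := key b hb
  simp only [pairInv]
  split_ifs <;> omega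

theorem negStrictAntiOn_of_pairInv_le {s : Finset ℤ} (hs : s ⊆ Icc 1 (n : ℤ))
    (hu' : NegStrictAntiOn u s)
    (h : ∀ q ∈ Icc 1 (n : ℤ) ×ˢ Icc 1 (n : ℤ), pairInv u q ≤ pairInv w q) :
    NegStrictAntiOn w s := by
  refine ⟨fun x hx => ?_, fun x hx y hy hxy => ?_⟩
  · have hq := h (x, x) (mem_product.2 ⟨hs hx, hs hx⟩)
    have := hu'.1 x hx
    simp only [pairInv] at hq
    split_ifs at hq <;> omega
  · have hq := h (x, y) (mem_product.2 ⟨hs hx, hs hy⟩)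
    have := hu'.1 x hx
    have := hu'.1 y hy
    have := hu'.2 hx hy hxy
    simp only [pairInv] at hq
    split_ifs at hq <;> omega

theorem lenB_lt_of_negStrictAntiOn (hu : IsSignedPerm n u) (hw : IsSignedPerm n w)
    (huc : u c = 1) (hwc : w c = 1) (hcn : |c| ≤ n) (hu' : NegStrictAntiOn u (posExcept n |c|))
    (hne : w ≠ u) : lenB n w < lenB n u := by
  rw [lenB_eq_sum_pairInv, lenB_eq_sum_pairInv]
  refine sum_lt_sum (fun q hq => ?_) ?_
  · obtain ⟨ha, hb⟩ := mem_product.1 hq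
    exact pairInv_le_of_negStrictAntiOn hu hw huc hwc hu' ha hb
  · by_contra! hle
    exact hne (eq_of_negStrictAntiOn_posExcept hw hu hwc huc hcn
      (negStrictAntiOn_of_pairInv_le (erase_subset _ _) hu' hle) hu')

-- One-line notation `(-2, …, -|c|, ±1, -(|c| + 1), …, -n)`, with `±1 = c / |c|` at position `|c|`.
def maxRepB (n : ℕ) (c : ℤ) (hc : c ≠ 0) : Perm ℤ where
  toFun x :=
    if x = c then 1 else if x = -c then -1
    else if 0 < x ∧ x < |c| then -(x + 1) else if -|c| < x ∧ x < 0 then 1 - x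
    else if (|c| < x ∧ x ≤ n) ∨ (-n ≤ x ∧ x < -|c|) then -x else x
  invFun y :=
    if y = 1 then c else if y = -1 then -c
    else if -|c| ≤ y ∧ y < -1 then -y - 1 else if 1 < y ∧ y ≤ |c| then 1 - y
    else if (|c| < y ∧ y ≤ n) ∨ (-n ≤ y ∧ y < -|c|) then -y else y
  left_inv x := by
    have h1 := Int.one_le_abs hc
    have h2 := abs_choice c
    grind (splits := 40)
  right_inv y := by
    have h1 := Int.one_le_abs hc
    have h2 := abs_choice c
    grind (splits := 40)

theorem maxRepB_apply_self (hc : c ≠ 0) : maxRepB n c hc c = 1 := if_pos rfl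

theorem isSignedPerm_maxRepB (hc : c ≠ 0) (hcn : |c| ≤ n) : IsSignedPerm n (maxRepB n c hc) := by
  have h1 := Int.one_le_abs hc
  have h2 := abs_choice c
  refine ⟨fun x => ?_, fun x hx => ?_⟩
  · simp only [maxRepB, Equiv.coe_fn_mk]
    grind
  · rw [lt_abs] at hx
    simp only [maxRepB, Equiv.coe_fn_mk]
    grind

theorem negStrictAntiOn_maxRepB (hc : c ≠ 0) :
    NegStrictAntiOn (maxRepB n c hc) (posExcept n |c|) := by
  have h1 := Int.one_le_abs hc
  have h2 := abs_choice c
  refine ⟨fun x hx => ?_, fun x hx y hy hxy => ?_⟩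
  · rw [mem_coe, mem_posExcept] at hx
    simp only [maxRepB, Equiv.coe_fn_mk]
    grind
  · rw [mem_coe, mem_posExcept] at hx hy
    simp only [maxRepB, Equiv.coe_fn_mk]
    grind

end MaxShape

/-- the maximal length representative of a left coset `W_P w` in
`Bₙ` is the unique element of the coset whose one-line notation has the values
`-2,-3,…,-n` appearing in that order. -/
theorem maxRep_iff_neg_two_to_n_in_order (n : ℕ) (u : Equiv.Perm ℤ)
    (hu : IsSignedPerm n u) :
    (∀ w : Equiv.Perm ℤ, IsSignedPerm n w → w * u⁻¹ ∈ WP_B n → w ≠ u →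
        lenB n w < lenB n u) ↔
      ((∀ k : ℤ, 2 ≤ k → k ≤ (n : ℤ) → 0 < u.symm (-k)) ∧
       (∀ k : ℤ, 2 ≤ k → k + 1 ≤ (n : ℤ) → u.symm (-k) < u.symm (-(k + 1)))) := by
  rcases Nat.eq_zero_or_pos n with rfl | hn
  · refine ⟨fun _ => ⟨fun k _ _ => by omega, fun k _ _ => by omega⟩, fun _ w hw _ hne => ?_⟩
    exact absurd (hw.ext hu fun x _ _ => by omega) hne
  set c := u.symm 1
  have huc : u c = 1 := u.apply_symm_apply 1
  have hc := hu.ne_zero_of_apply_eq_one huc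
  have hcn : |c| ≤ n := hu.inv.abs_apply_le (by rw [abs_one]; exact_mod_cast hn)
  constructor
  · intro hmax
    refine hu.neg_values_in_order_of_negStrictAntiOn huc ?_
    have hM := isSignedPerm_maxRepB hc hcn
    rcases eq_or_ne (maxRepB n c hc) u with h | hne
    · exact h ▸ negStrictAntiOn_maxRepB hc
    · exact absurd (hmax _ hM ((mul_inv_mem_WP_B_iff hu hM).2 (maxRepB_apply_self hc)) hne)
        (lenB_lt_of_negStrictAntiOn hM hu (maxRepB_apply_self hc) huc hcn
          (negStrictAntiOn_maxRepB hc) hne.symm).asymm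
  · rintro ⟨hpos, hmono⟩ w hw hmem hne
    exact lenB_lt_of_negStrictAntiOn hu hw huc ((mul_inv_mem_WP_B_iff hu hw).1 hmem) hcn
      (hu.negStrictAntiOn_of_neg_values_in_order huc hpos hmono) hne
end

section
/- Every symmetric (2,2n-1)-clan (a string of length 2n+1) satisfies exactly one of the following: (a) it consists of 2 plus signs and 2n-1 minus signs; (b) it consists of 2 pairs of matching natural numbers and 2n-3 minus signs, with the numbers forming one of the patterns (1,1,2,2), (1,2,1,2), or (1,2,2,1); (c) it consists of 1 pair of matching natural numbers, one plus sign located in the middle position n+1, and 2n-2 minus signs. -/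
/-- A clan of length `N`: each position carries a sign (`some true` = `+`,
`some false` = `-`) or is numeric (`none`), and the numeric positions are
matched in pairs by the fixed-point-free (on numeric positions) involution
`mate`.  Identifying clans up to renaming of the natural numbers, only this
matching matters. -/
structure Clan (N : ℕ) where
  sign : Fin N → Option Bool
  mate : Fin N → Fin N
  mate_invol : ∀ i, mate (mate i) = i
  mate_fix : ∀ i, sign i ≠ none → mate i = i
  mate_ne : ∀ i, sign i = none → mate i ≠ i

/-- The set of positions of `+` signs. -/
def Clan.plusSet {N : ℕ} (γ : Clan N) : Finset (Fin N) :=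
  Finset.univ.filter (fun i => γ.sign i = some true)

/-- The set of positions of `-` signs. -/
def Clan.minusSet {N : ℕ} (γ : Clan N) : Finset (Fin N) :=
  Finset.univ.filter (fun i => γ.sign i = some false)

/-- The set of numeric positions. -/
def Clan.numSet {N : ℕ} (γ : Clan N) : Finset (Fin N) :=
  Finset.univ.filter (fun i => γ.sign i = none)

/-- A clan is a `(2,q)`-clan when `#(+) - #(-) = 2 - q`. -/
def IsClan2 (q : ℕ) {N : ℕ} (γ : Clan N) : Prop :=
  (γ.plusSet.card : ℤ) - (γ.minusSet.card : ℤ) = 2 - (q : ℤ)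

/-- A clan is symmetric if reversing its string of characters gives the same
clan: signs are preserved under `i ↦ N+1-i` and matched pairs go to matched
pairs. -/
def Clan.IsSymmetric {N : ℕ} (γ : Clan N) : Prop :=
  (∀ i, γ.sign i.rev = γ.sign i) ∧ ∀ i, γ.mate i.rev = (γ.mate i).rev

/-- Type (a) symmetric `(2,2n-1)`-clan: 2 plus signs and `2n-1` minus signs. -/
def TypeA_oddLen (n : ℕ) (γ : Clan (2 * n + 1)) : Prop :=
  γ.plusSet.card = 2 ∧ γ.minusSet.card = 2 * n - 1 ∧ γ.numSet = ∅

/-- Type (b) symmetric `(2,2n-1)`-clan: 2 pairs of matching numbers and `2n-3`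
minus signs, with the numbers in one of the patterns `(1,1,2,2)`, `(1,2,1,2)`,
`(1,2,2,1)`. -/
def TypeB_oddLen (n : ℕ) (γ : Clan (2 * n + 1)) : Prop :=
  γ.plusSet.card = 0 ∧ γ.minusSet.card = 2 * n - 3 ∧
    ∃ p1 p2 p3 p4 : Fin (2 * n + 1), p1 < p2 ∧ p2 < p3 ∧ p3 < p4 ∧
      γ.numSet = {p1, p2, p3, p4} ∧
      ((γ.mate p1 = p2 ∧ γ.mate p3 = p4) ∨
       (γ.mate p1 = p3 ∧ γ.mate p2 = p4) ∨
       (γ.mate p1 = p4 ∧ γ.mate p2 = p3))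

/-- Type (c) symmetric `(2,2n-1)`-clan: 1 pair of matching numbers, a plus
sign in the middle position `n+1`, and `2n-2` minus signs. -/
def TypeC_oddLen (n : ℕ) (hn : 2 ≤ n) (γ : Clan (2 * n + 1)) : Prop :=
  γ.numSet.card = 2 ∧ γ.plusSet.card = 1 ∧ γ.minusSet.card = 2 * n - 2 ∧
    γ.sign ⟨n, by omega⟩ = some true

/-!
Since `#(+) + #(-) + #(numbers) = 2n + 1` and `#(+) - #(-) = 3 - 2n`, we get
`2 · #(+) + #(numbers) = 4`, so there are 0, 1 or 2 plus signs, giving types (b), (c) and (a)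
respectively; the types are disjoint because they have different numbers of plus signs.
A lone plus sign is fixed by the reversal `i ↦ N + 1 - i`, hence sits in the middle, and four
numeric positions are matched by one of the three perfect matchings of a 4-element set.
-/

theorem Finset.exists_lt_lt_lt_eq_of_card_eq_four {α : Type*} [LinearOrder α] {s : Finset α}
    (h : s.card = 4) : ∃ a b c d, a < b ∧ b < c ∧ c < d ∧ s = {a, b, c, d} := by
  let e := s.orderEmbOfFin h
  refine ⟨e 0, e 1, e 2, e 3, by simp, by simp, by simp, ?_⟩
  ext x
  rw [← Finset.mem_coe, ← s.range_orderEmbOfFin h]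
  simp only [Set.mem_range, Fin.exists_fin_succ, Fin.exists_fin_zero, Finset.mem_insert,
    Finset.mem_singleton, eq_comm, or_false]
  rfl

theorem Function.Involutive.pairing_of_four {α : Type*} {f : α → α} (hf : Function.Involutive f)
    {a b c d : α} (hab : a ≠ b) (hac : a ≠ c) (hbc : b ≠ c)
    (hmaps : Set.MapsTo f {a, b, c, d} {a, b, c, d})
    (hne : ∀ x ∈ ({a, b, c, d} : Set α), f x ≠ x) :
    (f a = b ∧ f c = d) ∨ (f a = c ∧ f b = d) ∨ (f a = d ∧ f b = c) := by
  have ha := hmaps (by simp : a ∈ ({a, b, c, d} : Set α))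
  have hb := hmaps (by simp : b ∈ ({a, b, c, d} : Set α))
  have hc := hmaps (by simp : c ∈ ({a, b, c, d} : Set α))
  simp only [Set.mem_insert_iff, Set.mem_singleton_iff] at ha hb hc
  have := hne a (by simp); have := hne b (by simp); have := hne c (by simp)
  have := hf a; have := hf b; have := hf c
  grind

theorem Fin.eq_mk_of_rev_eq_self {n : ℕ} {i : Fin (2 * n + 1)} (h : i.rev = i) :
    i = ⟨n, by omega⟩ := by
  have := congrArg Fin.val h
  rw [Fin.val_rev] at this
  ext
  simp only
  omega

namespace Clan

variable {N : ℕ} (γ : Clan N)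

@[simp] theorem mem_plusSet {i : Fin N} : i ∈ γ.plusSet ↔ γ.sign i = some true := by
  simp [plusSet]

@[simp] theorem mem_numSet {i : Fin N} : i ∈ γ.numSet ↔ γ.sign i = none := by
  simp [numSet]

theorem card_plusSet_add_card_minusSet_add_card_numSet :
    γ.plusSet.card + γ.minusSet.card + γ.numSet.card = N := by
  have := Finset.card_eq_sum_card_fiberwise (f := γ.sign) (s := .univ) (t := .univ) (by simp)
  simp only [Finset.card_univ, Fintype.card_fin, Fintype.sum_option, Fintype.sum_bool] at this
  simp only [plusSet, minusSet, numSet]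
  omega

theorem mapsTo_mate_numSet : Set.MapsTo γ.mate γ.numSet γ.numSet := by
  intro i hi
  by_contra h
  simp only [Finset.mem_coe, mem_numSet] at hi h
  exact γ.mate_ne i hi (by rw [← γ.mate_fix _ h, γ.mate_invol])

theorem mate_pattern_of_numSet_eq {a b c d : Fin N} (hab : a < b) (hbc : b < c)
    (h : γ.numSet = {a, b, c, d}) :
    (γ.mate a = b ∧ γ.mate c = d) ∨ (γ.mate a = c ∧ γ.mate b = d) ∨
      (γ.mate a = d ∧ γ.mate b = c) := by
  have hcoe : (γ.numSet : Set (Fin N)) = {a, b, c, d} := by simp [h]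
  refine Function.Involutive.pairing_of_four γ.mate_invol hab.ne (hab.trans hbc).ne hbc.ne
    (hcoe ▸ γ.mapsTo_mate_numSet) fun x hx => γ.mate_ne x ?_
  rwa [← hcoe, Finset.mem_coe, mem_numSet] at hx

theorem IsSymmetric.rev_mem_plusSet {γ : Clan N} (hsym : γ.IsSymmetric) {i : Fin N}
    (hi : i ∈ γ.plusSet) : i.rev ∈ γ.plusSet := by
  rw [mem_plusSet] at hi ⊢
  rwa [hsym.1]

end Clan

theorem IsClan2.two_mul_card_plusSet_add_card_numSet {q N : ℕ} {γ : Clan N}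
    (h : IsClan2 q γ) : 2 * (γ.plusSet.card : ℤ) + γ.numSet.card = N + 2 - q := by
  have := γ.card_plusSet_add_card_minusSet_add_card_numSet
  unfold IsClan2 at h
  omega

section OddLength

variable {n : ℕ} {γ : Clan (2 * n + 1)}

theorem typeA_oddLen_of_card_plusSet_eq_two (hclan : IsClan2 (2 * n - 1) γ)
    (hP : γ.plusSet.card = 2) : TypeA_oddLen n γ := by
  have := hclan.two_mul_card_plusSet_add_card_numSet
  unfold IsClan2 at hclan
  exact ⟨hP, by omega, Finset.card_eq_zero.mp (by omega)⟩

theorem typeB_oddLen_of_card_plusSet_eq_zero (hclan : IsClan2 (2 * n - 1) γ)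
    (hP : γ.plusSet.card = 0) : TypeB_oddLen n γ := by
  have := hclan.two_mul_card_plusSet_add_card_numSet
  unfold IsClan2 at hclan
  obtain ⟨a, b, c, d, hab, hbc, hcd, h⟩ :=
    Finset.exists_lt_lt_lt_eq_of_card_eq_four (s := γ.numSet) (by omega)
  exact ⟨hP, by omega, a, b, c, d, hab, hbc, hcd, h, γ.mate_pattern_of_numSet_eq hab hbc h⟩

theorem typeC_oddLen_of_card_plusSet_eq_one (hn : 2 ≤ n) (hsym : γ.IsSymmetric)
    (hclan : IsClan2 (2 * n - 1) γ) (hP : γ.plusSet.card = 1) : TypeC_oddLen n hn γ := by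
  have := hclan.two_mul_card_plusSet_add_card_numSet
  unfold IsClan2 at hclan
  refine ⟨by omega, hP, by omega, ?_⟩
  obtain ⟨i, hi⟩ := Finset.card_eq_one.mp hP
  have hmem : i ∈ γ.plusSet := by simp [hi]
  have hrev : i.rev = i := by simpa [hi] using hsym.rev_mem_plusSet hmem
  rw [← Fin.eq_mk_of_rev_eq_self hrev]
  exact γ.mem_plusSet.mp hmem

end OddLength

/-- every symmetric `(2,2n-1)`-clan is of exactly one of the
types (a), (b), (c). -/
theorem symm_clan_oddLen_trichotomy (n : ℕ) (hn : 2 ≤ n)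
    (γ : Clan (2 * n + 1)) (hsym : γ.IsSymmetric)
    (hclan : IsClan2 (2 * n - 1) γ) :
    (TypeA_oddLen n γ ∨ TypeB_oddLen n γ ∨ TypeC_oddLen n hn γ) ∧
    ¬ (TypeA_oddLen n γ ∧ TypeB_oddLen n γ) ∧
    ¬ (TypeA_oddLen n γ ∧ TypeC_oddLen n hn γ) ∧
    ¬ (TypeB_oddLen n γ ∧ TypeC_oddLen n hn γ) := by
  have hcount := hclan.two_mul_card_plusSet_add_card_numSet
  have hP : γ.plusSet.card = 0 ∨ γ.plusSet.card = 1 ∨ γ.plusSet.card = 2 := by omega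
  refine ⟨?_, fun ⟨hA, hB⟩ => ?_, fun ⟨hA, hC⟩ => ?_, fun ⟨hB, hC⟩ => ?_⟩
  · rcases hP with hP | hP | hP
    · exact .inr <| .inl <| typeB_oddLen_of_card_plusSet_eq_zero hclan hP
    · exact .inr <| .inr <| typeC_oddLen_of_card_plusSet_eq_one hn hsym hclan hP
    · exact .inl <| typeA_oddLen_of_card_plusSet_eq_two hclan hP
  · exact absurd (hA.1.symm.trans hB.1) (by decide)
  · exact absurd (hA.1.symm.trans hC.2.1) (by decide)
  · exact absurd (hB.1.symm.trans hC.2.1) (by decide)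
end
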